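/- Let f : ℝⁿ → ℝ be γ-strongly convex with differentiable conjugate, Ax̂ = b, and let d = Aᵀ S Sᵀ(Ax − b) and w = z − z_prev with ‖d‖²‖w‖² − ⟨d, w⟩² ≠ 0. With (α*, β*) from the exact minimization of h(α,β) = (1/(2γ))‖αd − βw‖² − ⟨x − x̂, αd − βw⟩, the momentum update z⁺ = z − α* d + β* w, x⁺ = ∇f*(z⁺) satisfies D_{f,z⁺}(x⁺, x̂) ≤ D_{f,z}(x, x̂) − (γ/2)·‖Sᵀ(Ax − b)‖⁴₂/‖Aᵀ S Sᵀ(Ax − b)‖²₂ whenever Sᵀ(Ax − b) ≠ 0. -/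

import Mathlib

/-!
Strong convexity at `x` with subgradient `z`, combined with Young's inequality, bounds the change of
the Bregman distance to `xhat` under a dual step `z ↦ z⁺` by the quadratic model
`(1/(2γ))‖z - z⁺‖² - ⟨x - xhat, z - z⁺⟩`, which is `h(α*, β*)`. Optimality of `(α*, β*)` lets us
compare with the pure gradient step `(α, 0)`, `α = γ‖Sᵀ(Ax - b)‖² / ‖d‖²`; since `Axhat = b`,
`⟨x - xhat, d⟩ = ‖Sᵀ(Ax - b)‖²`, and the model there equals `-(γ/2)‖Sᵀ(Ax - b)‖⁴ / ‖d‖²`.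
-/

open Matrix

section

variable {ι : Type*} [Fintype ι]

/-- `D_{f,z}(x, y)`. The paper writes `f y + f*(z) - ⟨z, y⟩`; the two agree when `z` is a
subgradient of `f` at `x`, by the Fenchel–Young equality `f*(z) = ⟨z, x⟩ - f x`. -/
def bregmanDist (f : (ι → ℝ) → ℝ) (z x y : ι → ℝ) : ℝ :=
  f y - f x - z ⬝ᵥ (y - x)

theorem dotProduct_le_young {γ : ℝ} (hγ : 0 < γ) (u p : ι → ℝ) :
    u ⬝ᵥ p ≤ 1 / (2 * γ) * (u ⬝ᵥ u) + γ / 2 * (p ⬝ᵥ p) := by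
  have hsq : 0 ≤ (u - γ • p) ⬝ᵥ (u - γ • p) :=
    Finset.sum_nonneg fun i _ => mul_self_nonneg _
  simp only [dotProduct_sub, sub_dotProduct, smul_dotProduct, dotProduct_smul, smul_eq_mul,
    dotProduct_comm p u] at hsq
  have hexpand : 1 / (2 * γ) * (u ⬝ᵥ u) + γ / 2 * (p ⬝ᵥ p) - u ⬝ᵥ p =
      (u ⬝ᵥ u - γ * (u ⬝ᵥ p) - γ * (u ⬝ᵥ p - γ * (p ⬝ᵥ p))) / (2 * γ) := by
    field_simp
    ring
  linarith [div_nonneg hsq (by positivity : (0 : ℝ) ≤ 2 * γ)]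

theorem bregmanDist_le_of_strongConvexAt {f : (ι → ℝ) → ℝ} {γ : ℝ} (hγ : 0 < γ)
    {x y z : ι → ℝ} (hsc : f x + z ⬝ᵥ (y - x) + γ / 2 * ((y - x) ⬝ᵥ (y - x)) ≤ f y)
    (z' xhat : ι → ℝ) :
    bregmanDist f z' y xhat ≤
      bregmanDist f z x xhat + (1 / (2 * γ) * ((z - z') ⬝ᵥ (z - z')) - (x - xhat) ⬝ᵥ (z - z')) := by
  have hyoung := dotProduct_le_young hγ (z - z') (x - y)
  unfold bregmanDist
  simp only [dotProduct_sub, sub_dotProduct] at hyoung hsc ⊢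
  linarith [dotProduct_comm x z, dotProduct_comm x z', dotProduct_comm xhat z,
    dotProduct_comm xhat z', dotProduct_comm z' z, dotProduct_comm y x]

theorem dotProduct_transpose_mulVec_mul_transpose_mulVec {m k : Type*} [Fintype m] [Fintype k]
    (A : Matrix m ι ℝ) (S : Matrix m k ℝ) (v : ι → ℝ) (r : m → ℝ) :
    v ⬝ᵥ Aᵀ *ᵥ ((S * Sᵀ) *ᵥ r) = Sᵀ *ᵥ (A *ᵥ v) ⬝ᵥ Sᵀ *ᵥ r := by
  rw [dotProduct_mulVec, vecMul_transpose, ← mulVec_mulVec, dotProduct_mulVec, ← mulVec_transpose]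

/-- Also valid, through `x / 0 = 0`, when `d = 0` or `γ = 0`. -/
theorem line_model_eq_at_minimizer (γ : ℝ) (d e : ι → ℝ) :
    1 / (2 * γ) * ((γ * (e ⬝ᵥ d) / (d ⬝ᵥ d)) • d ⬝ᵥ (γ * (e ⬝ᵥ d) / (d ⬝ᵥ d)) • d) -
        e ⬝ᵥ (γ * (e ⬝ᵥ d) / (d ⬝ᵥ d)) • d =
      -(γ / 2 * (e ⬝ᵥ d) ^ 2 / (d ⬝ᵥ d)) := by
  simp only [smul_dotProduct, dotProduct_smul, smul_eq_mul]
  rcases eq_or_ne (d ⬝ᵥ d) 0 with hd | hd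
  · simp [hd]
  rcases eq_or_ne γ 0 with hγ | hγ
  · simp [hγ]
  field_simp
  ring

end

theorem stmt17_general {m n q : ℕ} (f : (Fin n → ℝ) → ℝ) (γ : ℝ) (hγ : 0 < γ)
    (hsc : ∀ x y z : Fin n → ℝ, (∀ v, f v ≥ f x + z ⬝ᵥ (v - x)) →
      f y ≥ f x + z ⬝ᵥ (y - x) + γ / 2 * ((y - x) ⬝ᵥ (y - x)))
    (A : Matrix (Fin m) (Fin n) ℝ) (b : Fin m → ℝ) (xhat : Fin n → ℝ)
    (hb : A.mulVec xhat = b)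
    (z x : Fin n → ℝ) (hx : ∀ v, f v ≥ f x + z ⬝ᵥ (v - x))
    (S : Matrix (Fin m) (Fin q) ℝ)
    (d wvec : Fin n → ℝ)
    (hd : d = A.transpose.mulVec ((S * S.transpose).mulVec (A.mulVec x - b)))
    (h : ℝ → ℝ → ℝ)
    (hh : ∀ a b', h a b' =
      1 / (2 * γ) * ((a • d - b' • wvec) ⬝ᵥ (a • d - b' • wvec)) -
        (x - xhat) ⬝ᵥ (a • d - b' • wvec))
    (astar bstar : ℝ) (hopt : ∀ a b', h astar bstar ≤ h a b')
    (zplus xplus : Fin n → ℝ)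
    (hz : zplus = z - astar • d + bstar • wvec) :
    f xhat - f xplus - zplus ⬝ᵥ (xhat - xplus) ≤
      f xhat - f x - z ⬝ᵥ (xhat - x) -
        γ / 2 * (S.transpose.mulVec (A.mulVec x - b) ⬝ᵥ
          S.transpose.mulVec (A.mulVec x - b)) ^ 2 / (d ⬝ᵥ d) := by
  have hres : (x - xhat) ⬝ᵥ d =
      S.transpose.mulVec (A.mulVec x - b) ⬝ᵥ S.transpose.mulVec (A.mulVec x - b) := by
    rw [hd, dotProduct_transpose_mulVec_mul_transpose_mulVec, mulVec_sub, hb]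
  have hgradient := hopt (γ * ((x - xhat) ⬝ᵥ d) / (d ⬝ᵥ d)) 0
  rw [hh _ 0, zero_smul, sub_zero, line_model_eq_at_minimizer, hres, hh,
    show astar • d - bstar • wvec = z - zplus by rw [hz]; abel] at hgradient
  have hdescent := bregmanDist_le_of_strongConvexAt hγ (hsc x xplus z hx) zplus xhat
  unfold bregmanDist at hdescent
  linarith

theorem stmt17 {m n q : ℕ} (f : (Fin n → ℝ) → ℝ) (γ : ℝ) (hγ : 0 < γ)
    (hsc : ∀ x y z : Fin n → ℝ, (∀ v, f v ≥ f x + z ⬝ᵥ (v - x)) →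
      f y ≥ f x + z ⬝ᵥ (y - x) + γ / 2 * ((y - x) ⬝ᵥ (y - x)))
    (A : Matrix (Fin m) (Fin n) ℝ) (b : Fin m → ℝ) (xhat : Fin n → ℝ)
    (hb : A.mulVec xhat = b)
    (z zprev x : Fin n → ℝ) (hx : ∀ v, f v ≥ f x + z ⬝ᵥ (v - x))
    (S : Matrix (Fin m) (Fin q) ℝ)
    (d wvec : Fin n → ℝ)
    (hd : d = A.transpose.mulVec ((S * S.transpose).mulVec (A.mulVec x - b)))
    (hw : wvec = z - zprev)
    (hS : S.transpose.mulVec (A.mulVec x - b) ≠ 0)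
    (hgram : (d ⬝ᵥ d) * (wvec ⬝ᵥ wvec) - (d ⬝ᵥ wvec) ^ 2 ≠ 0)
    (h : ℝ → ℝ → ℝ)
    (hh : ∀ a b', h a b' =
      1 / (2 * γ) * ((a • d - b' • wvec) ⬝ᵥ (a • d - b' • wvec)) -
        (x - xhat) ⬝ᵥ (a • d - b' • wvec))
    (astar bstar : ℝ) (hopt : ∀ a b', h astar bstar ≤ h a b')
    (zplus xplus : Fin n → ℝ)
    (hz : zplus = z - astar • d + bstar • wvec)
    (hxp : ∀ v, f v ≥ f xplus + zplus ⬝ᵥ (v - xplus)) :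
    f xhat - f xplus - zplus ⬝ᵥ (xhat - xplus) ≤
      f xhat - f x - z ⬝ᵥ (xhat - x) -
        γ / 2 * (S.transpose.mulVec (A.mulVec x - b) ⬝ᵥ
          S.transpose.mulVec (A.mulVec x - b)) ^ 2 / (d ⬝ᵥ d) :=
  stmt17_general f γ hγ hsc A b xhat hb z x hx S d wvec hd h hh astar bstar hopt zplus xplus hz
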